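/- arXiv:1107.4183 — 7 statements merged into one kernel-verified Lean document; each statement's English description precedes it below -/
import Mathlib

section
/- Let N ≥ 1. In Cl(N) ⊗ Cl(N), for every 1 ≤ m ≤ N one has C̃_1 · C̃_m = C̃_{m+1} + m(N+1−m) · C̃_{m−1} (with C̃_{N+1} = 0). (Equation (4) in the proof of Proposition 1.4.) -/
noncomputable section

open scoped TensorProduct

/-- The quadratic form `Q(x) = x_1^2 + ⋯ + x_M^2` on `ℂ^M`. -/
def Qform (M : ℕ) : QuadraticForm ℂ (Fin M → ℂ) :=
  QuadraticMap.weightedSumSquares ℂ (fun _ : Fin M => (1 : ℂ))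

/-- The Clifford algebra `Cl(M)`. -/
abbrev Cl (M : ℕ) := CliffordAlgebra (Qform M)

/-- The generator `e_i` for `i : Fin M`. -/
def gen (M : ℕ) (i : Fin M) : Cl M :=
  CliffordAlgebra.ι (Qform M) (Pi.single i 1)

/-- The ordered product `e_{i_1} ⋯ e_{i_m}` over a subset `s = {i_1 < ⋯ < i_m}`. -/
def prodGen (M : ℕ) (s : Finset (Fin M)) : Cl M :=
  ((s.sort (· ≤ ·)).map (gen M)).prod

/-- `C̃_m = m!·∑_{i_1 < ⋯ < i_m} (e_{i_1}⋯e_{i_m}) ⊗ (e_{i_1}⋯e_{i_m})`; in particular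
`C̃_0 = 1`, `C̃_1 = ∑ e_i ⊗ e_i`, and `C̃_m = 0` for `m > N`. -/
def Ct (N : ℕ) (m : ℕ) : Cl N ⊗[ℂ] Cl N :=
  (m.factorial : ℂ) • ∑ s ∈ Finset.powersetCard m (Finset.univ : Finset (Fin N)),
    prodGen N s ⊗ₜ[ℂ] prodGen N s

/-!
Left multiplication by `e_i` sends `e_s` to `± e_{s \ {i}}` if `i ∈ s` and to `± e_{s ∪ {i}}`
otherwise, and the sign cancels in `e_s ⊗ e_s`. Hence `C̃_1 · ∑_{|s| = m} e_s ⊗ e_s` is the sum of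
`e_t ⊗ e_t` over all pairs `(i, s)` with `t = s ∆ {i}`; an `(m+1)`-set `t` arises from `m + 1`
such pairs and an `(m-1)`-set from `N - m + 1`, and the factorials turn `(m+1) · m!` into
`(m+1)!` and `(N - m + 1) · m!` into `m (N + 1 - m) · (m-1)!`.
-/

open Finset TensorProduct

theorem List.Perm.prod_map_eq_or_eq_neg {ι A : Type*} [Ring A] {f : ι → A}
    (hf : _root_.Pairwise fun i j => f i * f j = -(f j * f i)) {l₁ l₂ : List ι} (h : l₁.Perm l₂)
    (hl : l₁.Nodup) :
    (l₁.map f).prod = (l₂.map f).prod ∨ (l₁.map f).prod = -(l₂.map f).prod := by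
  induction h with
  | nil => exact .inl rfl
  | cons x _ ih =>
    rcases ih hl.of_cons with h | h <;> simp [h]
  | swap x y l =>
    have hyx : y ≠ x := (List.nodup_cons.mp hl).1 ∘ (· ▸ List.mem_cons_self)
    right
    simp only [List.map_cons, List.prod_cons, ← mul_assoc, hf hyx, neg_mul]
  | trans p₁ _ ih₁ ih₂ =>
    rcases ih₁ hl with h₁ | h₁ <;> rcases ih₂ (p₁.nodup_iff.mp hl) with h₂ | h₂ <;> simp [h₁, h₂]

theorem TensorProduct.tmul_self_eq_of_eq_or_eq_neg {R M : Type*} [CommRing R] [AddCommGroup M]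
    [Module R M] {x y : M} (h : x = y ∨ x = -y) : x ⊗ₜ[R] x = y ⊗ₜ[R] y := by
  rcases h with rfl | rfl
  · rfl
  · rw [neg_tmul, tmul_neg, neg_neg]

namespace Finset

variable {α M : Type*} [Fintype α] [DecidableEq α] [AddCommMonoid M] (F : Finset α → M)

theorem sum_filter_mem_powersetCard_succ_erase (i : α) (k : ℕ) :
    ∑ s ∈ (powersetCard (k + 1) univ).filter (i ∈ ·), F (s.erase i) =
      ∑ t ∈ (powersetCard k univ).filter (i ∉ ·), F t := by
  refine sum_nbij' (·.erase i) (insert i ·) ?_ ?_ ?_ ?_ fun _ _ => rfl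
  · intro s hs
    simp_all [card_erase_of_mem]
  · intro t ht
    simp_all [card_insert_of_notMem]
  · intro s hs
    exact insert_erase (mem_filter.mp hs).2
  · intro t ht
    exact erase_insert (mem_filter.mp ht).2

theorem sum_filter_notMem_powersetCard_insert (i : α) (k : ℕ) :
    ∑ s ∈ (powersetCard k univ).filter (i ∉ ·), F (insert i s) =
      ∑ t ∈ (powersetCard (k + 1) univ).filter (i ∈ ·), F t := by
  refine (sum_filter_mem_powersetCard_succ_erase (fun t => F (insert i t)) i k).symm.trans ?_
  exact sum_congr rfl fun s hs => congrArg F (insert_erase (mem_filter.mp hs).2)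

theorem sum_univ_sum_filter_notMem_powersetCard (k : ℕ) :
    ∑ i, ∑ t ∈ (powersetCard k univ).filter (i ∉ ·), F t =
      (Fintype.card α - k) • ∑ t ∈ powersetCard k univ, F t := by
  rw [sum_comm' (t' := powersetCard k univ) (s' := fun t => tᶜ) (by simp [and_comm]), smul_sum]
  refine sum_congr rfl fun t ht => ?_
  rw [sum_const, card_compl, mem_powersetCard_univ.mp ht]

theorem sum_univ_sum_filter_mem_powersetCard (k : ℕ) :
    ∑ i, ∑ t ∈ (powersetCard k univ).filter (i ∈ ·), F t =
      k • ∑ t ∈ powersetCard k univ, F t := by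
  rw [sum_comm' (t' := powersetCard k univ) (s' := id) (by simp [and_comm]), smul_sum]
  refine sum_congr rfl fun t ht => ?_
  rw [id, sum_const, mem_powersetCard_univ.mp ht]

theorem sum_univ_sum_powersetCard_succ_ite (k : ℕ) :
    ∑ i, ∑ s ∈ powersetCard (k + 1) univ, (if i ∈ s then F (s.erase i) else F (insert i s)) =
      (Fintype.card α - k) • ∑ t ∈ powersetCard k univ, F t +
        (k + 2) • ∑ t ∈ powersetCard (k + 2) univ, F t := by
  simp only [sum_ite, sum_filter_mem_powersetCard_succ_erase, sum_filter_notMem_powersetCard_insert,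
    sum_add_distrib, sum_univ_sum_filter_notMem_powersetCard, sum_univ_sum_filter_mem_powersetCard]

end Finset

section Clifford

variable (M : ℕ)

theorem Qform_single (i : Fin M) : Qform M (Pi.single i 1) = 1 := by
  simp [Qform, QuadraticMap.weightedSumSquares_apply, Pi.single_apply]

theorem polar_Qform_single {i j : Fin M} (h : i ≠ j) :
    QuadraticMap.polar (Qform M) (Pi.single i 1) (Pi.single j 1) = 0 := by
  simp [QuadraticMap.polar, Qform, QuadraticMap.weightedSumSquares_apply, Pi.single_apply, mul_add,
    sum_add_distrib, h, h.symm]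

theorem gen_mul_self (i : Fin M) : gen M i * gen M i = 1 := by
  rw [gen, CliffordAlgebra.ι_sq_scalar, Qform_single, map_one]

theorem gen_mul_gen_of_ne {i j : Fin M} (h : i ≠ j) :
    gen M i * gen M j = -(gen M j * gen M i) :=
  eq_neg_of_add_eq_zero_left <| by
    rw [gen, gen, CliffordAlgebra.ι_mul_ι_add_swap, polar_Qform_single M h, map_zero]

variable {M}

theorem gen_mul_prodGen_of_notMem {i : Fin M} {s : Finset (Fin M)} (h : i ∉ s) :
    gen M i * prodGen M s = prodGen M (insert i s) ∨
      gen M i * prodGen M s = -prodGen M (insert i s) := by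
  have hnodup : (i :: s.sort (· ≤ ·)).Nodup :=
    List.nodup_cons.mpr ⟨by simpa using h, s.sort_nodup _⟩
  have hperm : (i :: s.sort (· ≤ ·)).Perm ((insert i s).sort (· ≤ ·)) :=
    (List.perm_ext_iff_of_nodup hnodup (sort_nodup _ _)).mpr fun a => by simp
  simpa [prodGen] using hperm.prod_map_eq_or_eq_neg (fun _ _ => gen_mul_gen_of_ne M) hnodup

theorem gen_mul_prodGen_of_mem {i : Fin M} {s : Finset (Fin M)} (h : i ∈ s) :
    gen M i * prodGen M s = prodGen M (s.erase i) ∨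
      gen M i * prodGen M s = -prodGen M (s.erase i) := by
  have key := gen_mul_prodGen_of_notMem (notMem_erase i s)
  rw [insert_erase h] at key
  rcases key with hs | hs
  · left
    rw [← hs, ← mul_assoc, gen_mul_self, one_mul]
  · right
    rw [← neg_neg (prodGen M s), ← hs, mul_neg, ← mul_assoc, gen_mul_self, one_mul]

def prodGenDiag (M : ℕ) (s : Finset (Fin M)) : Cl M ⊗[ℂ] Cl M :=
  prodGen M s ⊗ₜ[ℂ] prodGen M s

theorem gen_tmul_gen_mul_prodGenDiag (i : Fin M) (s : Finset (Fin M)) :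
    (gen M i ⊗ₜ[ℂ] gen M i) * prodGenDiag M s =
      if i ∈ s then prodGenDiag M (s.erase i) else prodGenDiag M (insert i s) := by
  rw [prodGenDiag, Algebra.TensorProduct.tmul_mul_tmul]
  split_ifs with h
  · exact tmul_self_eq_of_eq_or_eq_neg (gen_mul_prodGen_of_mem h)
  · exact tmul_self_eq_of_eq_or_eq_neg (gen_mul_prodGen_of_notMem h)

end Clifford

theorem Ct_eq_sum_prodGenDiag (N m : ℕ) :
    Ct N m = (m.factorial : ℂ) • ∑ s ∈ powersetCard m univ, prodGenDiag N s := rfl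

theorem Ct_one (N : ℕ) : Ct N 1 = ∑ i, gen N i ⊗ₜ[ℂ] gen N i := by
  rw [Ct, powersetCard_one, sum_map]
  simp [prodGen, sort_singleton]

theorem Ct_recursion_general (N : ℕ) (m : ℕ) (hm1 : 1 ≤ m) :
    Ct N 1 * Ct N m = Ct N (m + 1) + ((m * (N + 1 - m) : ℕ) : ℂ) • Ct N (m - 1) := by
  obtain ⟨k, rfl⟩ := Nat.exists_eq_add_of_le' hm1
  have hexpand : Ct N 1 * Ct N (k + 1) = ((k + 1).factorial : ℂ) •
      ∑ i, ∑ s ∈ powersetCard (k + 1) univ,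
        if i ∈ s then prodGenDiag N (s.erase i) else prodGenDiag N (insert i s) := by
    rw [Ct_one, Ct_eq_sum_prodGenDiag N (k + 1), mul_smul_comm, sum_mul_sum]
    simp only [gen_tmul_gen_mul_prodGenDiag]
  rw [hexpand, sum_univ_sum_powersetCard_succ_ite, Fintype.card_fin, Ct_eq_sum_prodGenDiag,
    Ct_eq_sum_prodGenDiag, Nat.add_sub_cancel, Nat.add_sub_add_right, ← Nat.cast_smul_eq_nsmul ℂ,
    ← Nat.cast_smul_eq_nsmul ℂ (k + 2), Nat.factorial_succ (k + 1), Nat.factorial_succ k]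
  push_cast
  module

/-- Equation (4): `C̃_1 C̃_m = C̃_{m+1} + m(N+1−m) C̃_{m−1}` for `1 ≤ m ≤ N`. -/
theorem Ct_recursion (N : ℕ) (hN : 1 ≤ N) (m : ℕ) (hm1 : 1 ≤ m) (hmN : m ≤ N) :
    Ct N 1 * Ct N m = Ct N (m + 1) + ((m * (N + 1 - m) : ℕ) : ℂ) • Ct N (m - 1) :=
  Ct_recursion_general N m hm1
end
end

section
/- Let N ≥ 1 and let i = √−1 ∈ ℂ. Then in ℂ[x] one has the factorization P_{N+1}(N, x) = ∏_{r=0}^{N} (x − (N−2r)·i); in particular the roots of P_{N+1}(N, ·) are exactly the N+1 numbers (N−2r)·i, 0 ≤ r ≤ N. (Lemma 1.6(a).) -/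
noncomputable section

/-- The polynomials `P_m(N,x)`: `P_0 = 1`, `P_1 = x`,
`P_{m+1} = x·P_m + m(N+1−m)·P_{m−1}`. -/
def Ppoly (N : ℕ) : ℕ → Polynomial ℂ
  | 0 => 1
  | 1 => Polynomial.X
  | (m + 2) => Polynomial.X * Ppoly N (m + 1) +
      Polynomial.C (((m : ℂ) + 1) * ((N : ℂ) - m)) * Ppoly N m

/-!
Shifting `N` to `N + 1` amounts to translating the variable by `i`:
`P_{m+1}(N+1, x) = P_{m+1}(N, x+i) − (m+1)i·P_m(N, x+i)`, by two-step induction on `m`.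
Since the coefficient `m(N+1−m)` vanishes at `m = N + 1`, `P_{N+2}(N, y) = y·P_{N+1}(N, y)`, and the
identity at `m = N + 1` becomes `P_{N+2}(N+1, x) = (x − (N+1)i)·P_{N+1}(N, x+i)`. Induction on `N` then
produces the roots `(N−2r)i`, each translated by `−i` at every step, together with the new root `(N+1)i`.
-/

open Polynomial Complex

lemma Ppoly_add_two (N m : ℕ) : Ppoly N (m + 2) =
    X * Ppoly N (m + 1) + C (((m : ℂ) + 1) * ((N : ℂ) - m)) * Ppoly N m := rfl

lemma Ppoly_self_add_two (N : ℕ) : Ppoly N (N + 2) = X * Ppoly N (N + 1) := by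
  simp [Ppoly_add_two]

lemma eval_Ppoly_succ_shift (n m : ℕ) (x : ℂ) :
    (Ppoly (n + 1) (m + 1)).eval x =
      (Ppoly n (m + 1)).eval (x + I) - (m + 1) * I * (Ppoly n m).eval (x + I) := by
  induction m using Nat.twoStepInduction with
  | zero => simp [Ppoly]
  | one =>
    simp only [Ppoly, eval_add, eval_mul, eval_X, eval_C, eval_one]
    push_cast
    linear_combination I_sq
  | more m ih₀ ih₁ =>
    rw [Ppoly_add_two, eval_add, eval_mul, eval_mul, eval_X, eval_C, ih₁, ih₀,
      Ppoly_add_two n (m + 1), Ppoly_add_two n m]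
    simp only [eval_add, eval_mul, eval_X, eval_C]
    push_cast
    linear_combination ((m : ℂ) + 2) * (Ppoly n (m + 1)).eval (x + I) * I_sq

lemma Ppoly_succ_self_add_two (N : ℕ) :
    Ppoly (N + 1) (N + 2) = (X - C ((N + 1 : ℂ) * I)) * (Ppoly N (N + 1)).comp (X + C I) := by
  refine Polynomial.funext fun x => ?_
  rw [eval_Ppoly_succ_shift, Ppoly_self_add_two]
  simp only [eval_mul, eval_sub, eval_add, eval_X, eval_C, eval_comp]
  push_cast
  ring

lemma X_sub_C_comp_X_add_C {R : Type*} [CommRing R] (a b : R) :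
    (X - C a).comp (X + C b) = X - C (a - b) := by
  simp only [sub_comp, X_comp, C_comp, C_sub]
  ring

theorem Ppoly_factorization_general (N : ℕ) :
    Ppoly N (N + 1) =
      ∏ r ∈ Finset.range (N + 1),
        (Polynomial.X - Polynomial.C (((N : ℂ) - 2 * r) * Complex.I)) := by
  induction N with
  | zero => simp [Ppoly]
  | succ N ih =>
    rw [Ppoly_succ_self_add_two, ih, prod_comp, Finset.prod_range_succ' _ (N + 1), mul_comm]
    congr 1
    · refine Finset.prod_congr rfl fun r _ => ?_
      rw [X_sub_C_comp_X_add_C]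
      congr 2
      push_cast
      ring
    · congr 2
      push_cast
      ring

/-- Lemma 1.6(a): `P_{N+1}(N, x) = ∏_{r=0}^{N} (x − (N−2r)·i)`; in particular the roots
of `P_{N+1}(N, ·)` are exactly the `N+1` numbers `(N−2r)·i`, `0 ≤ r ≤ N`. -/
theorem Ppoly_factorization (N : ℕ) (hN : 1 ≤ N) :
    Ppoly N (N + 1) =
      ∏ r ∈ Finset.range (N + 1),
        (Polynomial.X - Polynomial.C (((N : ℂ) - 2 * r) * Complex.I)) :=
  Ppoly_factorization_general N
end
end

section
/- Let N ≥ 1 and let i = √−1. The characteristic polynomial of the complex (N+1)×(N+1) matrix E − F equals ∏_{r=0}^{N} (X − (N−2r)·i); equivalently, the eigenvalues of E − F are exactly the N+1 distinct numbers (N−2r)·i for 0 ≤ r ≤ N. (Lemma 1.5(a).) -/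
noncomputable section

/-- The matrix of `E` acting on the `(N+1)`-dimensional irreducible representation of
`sl₂`: `E·e_r = (N−r+1)·e_{r−1}`, i.e. `E_{r−1,r} = N−r+1` for `1 ≤ r ≤ N`. -/
def Emat (N : ℕ) : Matrix (Fin (N + 1)) (Fin (N + 1)) ℂ :=
  fun r c => if (c : ℕ) = (r : ℕ) + 1 then (N : ℂ) - (r : ℕ) else 0

/-- The matrix of `F`: `F·e_r = (r+1)·e_{r+1}`, i.e. `F_{r+1,r} = r+1` for `0 ≤ r ≤ N−1`. -/
def Fmat (N : ℕ) : Matrix (Fin (N + 1)) (Fin (N + 1)) ℂ :=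
  fun r c => if (r : ℕ) = (c : ℕ) + 1 then (r : ℕ) else 0

/-
Realize `V_N` as binary forms of degree `N`, with `e_r ↔ C(N,r) x^(N-r) y^r`; then `E = x ∂_y`
and `F = y ∂ₓ`, so `E - F` is the infinitesimal rotation `x ∂_y - y ∂ₓ`. Since `x ± iy` are
eigenvectors of it with eigenvalues `±i`, the forms `(x + iy)^a (x - iy)^b` with `a + b = N` are
eigenvectors with eigenvalues `(a - b) i`. These are `N + 1` distinct roots of the monic
characteristic polynomial of degree `N + 1`, which is therefore their product of linear factors.
-/

open Polynomial Matrix Complex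
open scoped Nat

namespace Matrix

variable {K n : Type*} [Field K] [Fintype n] [DecidableEq n]

theorem isRoot_charpoly_of_mulVec_eq_smul {M : Matrix n n K} {v : n → K} {μ : K} (hv : v ≠ 0)
    (h : M *ᵥ v = μ • v) : M.charpoly.IsRoot μ := by
  rw [IsRoot, eval_charpoly, ← exists_mulVec_eq_zero_iff]
  refine ⟨v, hv, ?_⟩
  ext i
  simp [sub_mulVec, h]

theorem charpoly_eq_prod_X_sub_C_of_isRoot (M : Matrix n n K) (s : Finset K)
    (hcard : s.card = Fintype.card n) (hroot : ∀ μ ∈ s, M.charpoly.IsRoot μ) :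
    M.charpoly = ∏ μ ∈ s, (X - C μ) := by
  refine eq_of_monic_of_dvd_of_natDegree_le (monic_prod_of_monic _ _ fun μ _ => monic_X_sub_C μ)
    M.charpoly_monic ?_ ?_
  · exact Finset.prod_dvd_of_coprime
      ((pairwise_coprime_X_sub_C Function.injective_id).set_pairwise _)
      fun μ hμ => dvd_iff_isRoot.mpr (hroot μ hμ)
  · rw [charpoly_natDegree_eq_dim, natDegree_finsetProd_X_sub_C_eq_card, hcard]

end Matrix

theorem mul_derivative_pow_of_mul_derivative {R : Type*} [CommRing R] {q r u : R[X]}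
    (h : q * derivative u = r * u) (k : ℕ) : q * derivative (u ^ k) = k * r * u ^ k := by
  induction k with
  | zero => simp
  | succ k ih =>
    rw [pow_succ, derivative_mul]
    push_cast
    linear_combination u * ih + u ^ k * h

theorem Emat_mulVec_apply (N : ℕ) (w : ℕ → ℂ) (s : Fin (N + 1)) :
    (Emat N *ᵥ fun c => w c) s = (N - s) * w (s + 1) := by
  simp only [mulVec, dotProduct, Emat, ite_mul, zero_mul]
  rw [Fin.sum_univ_eq_sum_range (fun c => if c = (s : ℕ) + 1 then (N - s : ℂ) * w c else 0),
    Finset.sum_ite_eq']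
  split_ifs with hs
  · rfl
  · rw [show (s : ℕ) = N by simp at hs; omega, sub_self, zero_mul]

theorem Fmat_mulVec_apply (N : ℕ) (w : ℕ → ℂ) (s : Fin (N + 1)) :
    (Fmat N *ᵥ fun c => w c) s = s * w (s - 1) := by
  simp only [mulVec, dotProduct, Fmat, ite_mul, zero_mul]
  rw [Fin.sum_univ_eq_sum_range (fun c => if (s : ℕ) = c + 1 then (s : ℂ) * w c else 0)]
  obtain ⟨_ | t, hs⟩ := s
  · simp
  · simp [Finset.sum_ite_eq, show t < N + 1 by omega]

theorem coeff_X_mul_derivative {R : Type*} [Semiring R] (p : R[X]) (k : ℕ) :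
    (X * derivative p).coeff k = k * p.coeff k := by
  cases k with
  | zero => simp
  | succ k => rw [coeff_X_mul, coeff_derivative, Nat.cast_comm]; push_cast; rfl

/-- With `e_k ↔ C(N,k) x^(N-k) y^k`, the binary form `x^N p(y/x)` has `k`-th coordinate
`p.coeff k / C(N,k)`; we scale all coordinates by `N!`. -/
def binaryFormCoeff (N : ℕ) (p : ℂ[X]) (k : ℕ) : ℂ := k ! * (N - k)! * p.coeff k

def binaryFormVec (N : ℕ) (p : ℂ[X]) : Fin (N + 1) → ℂ := fun s => binaryFormCoeff N p s

theorem Emat_mulVec_binaryFormVec {N : ℕ} {p : ℂ[X]} (hp : p.natDegree ≤ N) :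
    Emat N *ᵥ binaryFormVec N p = binaryFormVec N (derivative p) := by
  ext ⟨s, hs⟩
  refine (Emat_mulVec_apply N (binaryFormCoeff N p) ⟨s, hs⟩).trans ?_
  simp only [binaryFormVec, binaryFormCoeff, coeff_derivative]
  rcases (Nat.lt_succ_iff.mp hs).eq_or_lt with rfl | hlt
  · simp [coeff_eq_zero_of_natDegree_lt (Nat.lt_succ_of_le hp)]
  · obtain ⟨k, rfl⟩ := Nat.exists_eq_add_of_lt hlt
    rw [show s + k + 1 - (s + 1) = k by omega, show s + k + 1 - s = k + 1 by omega]
    push_cast [Nat.factorial_succ]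
    ring

/-- `F` acts as `y ∂ₓ`, which at `x = 1` becomes `p ↦ X (N p - X p')`. -/
theorem Fmat_mulVec_binaryFormVec (N : ℕ) (p : ℂ[X]) :
    Fmat N *ᵥ binaryFormVec N p = binaryFormVec N (X * (C (N : ℂ) * p - X * derivative p)) := by
  ext ⟨s, hs⟩
  refine (Fmat_mulVec_apply N (binaryFormCoeff N p) ⟨s, hs⟩).trans ?_
  simp only [binaryFormVec, binaryFormCoeff]
  cases s with
  | zero => simp
  | succ t =>
    rw [coeff_X_mul, coeff_sub, coeff_C_mul, coeff_X_mul_derivative,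
      Nat.add_sub_cancel, show N - t = N - (t + 1) + 1 by omega]
    push_cast [Nat.factorial_succ, Nat.cast_sub (by omega : t + 1 ≤ N)]
    ring

theorem Emat_sub_Fmat_mulVec_binaryFormVec {N : ℕ} {p : ℂ[X]} (hp : p.natDegree ≤ N) :
    (Emat N - Fmat N) *ᵥ binaryFormVec N p =
      binaryFormVec N ((1 + X ^ 2) * derivative p - C (N : ℂ) * X * p) := by
  rw [sub_mulVec, Emat_mulVec_binaryFormVec hp, Fmat_mulVec_binaryFormVec]
  ext s
  simp only [Pi.sub_apply, binaryFormVec, binaryFormCoeff, ← mul_sub, ← coeff_sub]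
  congr 2
  ring

/-- `(x + iy)^a (x - iy)^b` at `x = 1`. -/
def rotationEigenform (a b : ℕ) : ℂ[X] := (1 + C I * X) ^ a * (1 - C I * X) ^ b

theorem one_add_X_sq_mul_derivative_rotationEigenform (a b : ℕ) :
    (1 + X ^ 2) * derivative (rotationEigenform a b) =
      (C ((a + b : ℂ)) * X + C ((a - b) * I)) * rotationEigenform a b := by
  have hI : (C I : ℂ[X]) ^ 2 = -1 := by rw [← C_pow, I_sq, C_neg, C_1]
  have hplus : (1 + X ^ 2) * derivative (1 + C I * X) = (X + C I) * (1 + C I * X) := by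
    simp only [derivative_add, derivative_one, derivative_C_mul_X]
    linear_combination -X * hI
  have hminus : (1 + X ^ 2) * derivative (1 - C I * X) = (X - C I) * (1 - C I * X) := by
    simp only [derivative_sub, derivative_one, derivative_C_mul_X]
    linear_combination -X * hI
  rw [rotationEigenform, derivative_mul]
  simp only [map_add, map_mul, map_sub, map_natCast]
  linear_combination (1 - C I * X) ^ b * mul_derivative_pow_of_mul_derivative hplus a +
    (1 + C I * X) ^ a * mul_derivative_pow_of_mul_derivative hminus b

theorem natDegree_rotationEigenform_le (a b : ℕ) :
    (rotationEigenform a b).natDegree ≤ a + b := by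
  unfold rotationEigenform
  compute_degree

theorem coeff_rotationEigenform_zero (a b : ℕ) : (rotationEigenform a b).coeff 0 = 1 := by
  simp [rotationEigenform, coeff_zero_eq_eval_zero]

theorem isRoot_charpoly_Emat_sub_Fmat (a b : ℕ) :
    (Emat (a + b) - Fmat (a + b)).charpoly.IsRoot ((a - b) * I) := by
  refine isRoot_charpoly_of_mulVec_eq_smul (v := binaryFormVec (a + b) (rotationEigenform a b))
    (fun h => ?_) ?_
  · have := congrFun h 0
    simp [binaryFormVec, binaryFormCoeff, coeff_rotationEigenform_zero,
      Nat.factorial_ne_zero] at this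
  · have heigen : (1 + X ^ 2) * derivative (rotationEigenform a b) -
        C ((a + b : ℕ) : ℂ) * X * rotationEigenform a b =
          C ((a - b) * I) * rotationEigenform a b := by
      rw [one_add_X_sq_mul_derivative_rotationEigenform]
      push_cast
      ring
    rw [Emat_sub_Fmat_mulVec_binaryFormVec (natDegree_rotationEigenform_le a b)]
    ext s
    simp only [binaryFormVec, binaryFormCoeff, heigen, coeff_C_mul, Pi.smul_apply, smul_eq_mul]
    ring

theorem charpoly_E_sub_F_general (N : ℕ) :
    (Emat N - Fmat N).charpoly =
      ∏ r ∈ Finset.range (N + 1),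
        (Polynomial.X - Polynomial.C (((N : ℂ) - 2 * r) * Complex.I)) := by
  have hinj : Set.InjOn (fun r : ℕ => ((N : ℂ) - 2 * r) * I) (Finset.range (N + 1)) := by
    intro a _ b _ h
    have h' := mul_right_cancel₀ I_ne_zero h
    exact_mod_cast (by linear_combination -h' / 2 : (a : ℂ) = b)
  rw [← Finset.prod_image (f := fun μ => X - C μ) hinj]
  refine charpoly_eq_prod_X_sub_C_of_isRoot _ _ (by simp [Finset.card_image_of_injOn hinj]) ?_
  simp only [Finset.mem_image, Finset.mem_range, forall_exists_index, and_imp]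
  rintro _ r hr rfl
  obtain ⟨a, rfl⟩ : ∃ a, N = a + r := ⟨N - r, by omega⟩
  convert isRoot_charpoly_Emat_sub_Fmat a r using 1
  push_cast
  ring

/-- Lemma 1.5(a): the characteristic polynomial of `E − F` is
`∏_{r=0}^{N} (X − (N−2r)·i)`; equivalently the eigenvalues of `E − F` are exactly the
`N+1` distinct numbers `(N−2r)·i`, `0 ≤ r ≤ N`. -/
theorem charpoly_E_sub_F (N : ℕ) (hN : 1 ≤ N) :
    (Emat N - Fmat N).charpoly =
      ∏ r ∈ Finset.range (N + 1),
        (Polynomial.X - Polynomial.C (((N : ℂ) - 2 * r) * Complex.I)) :=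
  charpoly_E_sub_F_general N
end
end

section
/- Let k ≥ 1 be an integer. For every ε ∈ {+1, −1}^k, the map sending j ∈ {1, …, k} to ε_j·(k−j) − ∑_{i=1}^{j−1} ε_i is a bijection from {1, …, k} onto the set {k+1−2r : 1 ≤ r ≤ k} = {k−1, k−3, …, 1−k}. (Combinatorial claim in the proof of Lemma 4.2.) -/
/-! Let `S_j = ∑_{i<j} ε_i`. The values not yet taken before step `j` form the arithmetic
progression of step 2 with `k - j` terms centred at `-S_j`; step `j` takes its top end if
`ε_j = 1` and its bottom end if `ε_j = -1`, and what remains is the progression of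
`k - j - 1` terms centred at `-S_{j+1} = -S_j - ε_j`. Concretely, `|S_j| ≤ j` and
`S_j ≡ j (mod 2)` put every value in the target, and for `a < b` the value at `b` lies strictly
below the value at `a` when `ε_a = 1` and strictly above it when `ε_a = -1`; an injection between
two sets of size `k` is onto. -/

open Finset

lemma Finset.abs_sum_le_card_of_abs_le_one {ι R : Type*} [Ring R] [LinearOrder R]
    [IsOrderedRing R] {s : Finset ι} {f : ι → R} (hf : ∀ i ∈ s, |f i| ≤ 1) :
    |∑ i ∈ s, f i| ≤ #s := by
  simpa using (abs_sum_le_sum_abs f s).trans (sum_le_card_nsmul s _ 1 hf)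

lemma Finset.even_sum_add_card_of_sign {ι : Type*} {s : Finset ι} {ε : ι → ℤ}
    (hε : ∀ i ∈ s, ε i = 1 ∨ ε i = -1) : Even (∑ i ∈ s, ε i + #s) := by
  have : ∑ i ∈ s, ε i + #s = ∑ i ∈ s, (ε i + 1) := by simp [sum_add_distrib]
  rw [this]
  refine even_sum _ fun i hi => ?_
  rcases hε i hi with h | h <;> simp [h]

lemma Finset.sum_Iio_eq_sum_Iio_add_add_sum_Ioo {ι M : Type*} [LinearOrder ι]
    [LocallyFiniteOrder ι] [LocallyFiniteOrderBot ι] [AddCommMonoid M] (f : ι → M) {a b : ι}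
    (hab : a < b) : ∑ i ∈ Iio b, f i = ∑ i ∈ Iio a, f i + f a + ∑ i ∈ Ioo a b, f i := by
  have hsplit : Iio b = Iio a ∪ Ico a b := by
    rw [← coe_inj, coe_union, coe_Iio, coe_Iio, coe_Ico, Set.Iio_union_Ico_eq_Iio hab.le]
  have hdisj : Disjoint (Iio a) (Ico a b) := by
    rw [← disjoint_coe, coe_Iio, coe_Ico]
    exact (Set.Iio_disjoint_Ici le_rfl).mono_right Set.Ico_subset_Ici_self
  rw [hsplit, sum_union hdisj, ← Ioo_insert_left hab, sum_insert left_notMem_Ioo, add_assoc]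

lemma abs_le_one_of_sign {x : ℤ} (hx : x = 1 ∨ x = -1) : |x| ≤ 1 := by
  rcases hx with rfl | rfl <;> simp

section

variable {k : ℕ} {ε : Fin k → ℤ}

-- With the 0-based index `j : Fin k`, the paper's `ε_j (k - j) - ∑_{i<j} ε_i` becomes:
def signedPick (ε : Fin k → ℤ) (j : Fin k) : ℤ :=
  ε j * ((k : ℤ) - 1 - (j : ℕ)) - ∑ i ∈ Iio j, ε i

lemma signedPick_mem_image_Icc (hε : ∀ j, ε j = 1 ∨ ε j = -1) (j : Fin k) :
    signedPick ε j ∈ (Icc 1 (k : ℤ)).image fun r => (k : ℤ) + 1 - 2 * r := by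
  have hbound := abs_le.1 (abs_sum_le_card_of_abs_le_one fun i _ => abs_le_one_of_sign (hε i) :
    |∑ i ∈ Iio j, ε i| ≤ #(Iio j))
  obtain ⟨q, hq⟩ := even_sum_add_card_of_sign fun i (_ : i ∈ Iio j) => hε i
  rw [Fin.card_Iio] at hbound hq
  have hj := j.isLt
  simp only [mem_image, mem_Icc, signedPick]
  rcases hε j with h | h <;> rw [h]
  · exact ⟨q + 1, by omega, by omega⟩
  · exact ⟨k - j + q, by omega, by omega⟩

lemma mul_signedPick_sub_signedPick_pos (hε : ∀ j, ε j = 1 ∨ ε j = -1) {a b : Fin k}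
    (hab : a < b) : 0 < ε a * (signedPick ε a - signedPick ε b) := by
  have hbetween := abs_le.1 (abs_sum_le_card_of_abs_le_one fun i _ => abs_le_one_of_sign (hε i) :
    |∑ i ∈ Ioo a b, ε i| ≤ #(Ioo a b))
  rw [Fin.card_Ioo] at hbetween
  have hab' : (a : ℕ) < b := hab
  have hbk := b.isLt
  unfold signedPick
  rw [sum_Iio_eq_sum_Iio_add_add_sum_Ioo ε hab]
  rcases hε a with ha | ha <;> rcases hε b with hb | hb <;> rw [ha, hb] <;> omega

lemma signedPick_injective (hε : ∀ j, ε j = 1 ∨ ε j = -1) :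
    Function.Injective (signedPick ε) := by
  intro a b h
  by_contra hne
  rcases lt_or_gt_of_ne hne with hab | hba
  · simpa [h] using mul_signedPick_sub_signedPick_pos hε hab
  · simpa [h] using mul_signedPick_sub_signedPick_pos hε hba

lemma setOf_add_one_sub_two_mul_eq_image_Icc :
    {m : ℤ | ∃ r : ℤ, 1 ≤ r ∧ r ≤ (k : ℤ) ∧ m = (k : ℤ) + 1 - 2 * r}
      = ↑((Icc 1 (k : ℤ)).image fun r => (k : ℤ) + 1 - 2 * r) := by
  ext m; simp [eq_comm, and_assoc]

end

theorem sign_vector_bijection_general (k : ℕ) (ε : Fin k → ℤ)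
    (hε : ∀ j, ε j = 1 ∨ ε j = -1) :
    Set.BijOn (fun j : Fin k => ε j * ((k : ℤ) - 1 - (j : ℕ)) - ∑ i ∈ Finset.Iio j, ε i)
      Set.univ
      {m : ℤ | ∃ r : ℤ, 1 ≤ r ∧ r ≤ (k : ℤ) ∧ m = (k : ℤ) + 1 - 2 * r} := by
  rw [setOf_add_one_sub_two_mul_eq_image_Icc, ← coe_univ]
  have hmaps : Set.MapsTo (signedPick ε) (univ : Finset (Fin k)) _ :=
    fun j _ => signedPick_mem_image_Icc hε j
  have hinj : Set.InjOn (signedPick ε) (univ : Finset (Fin k)) := (signedPick_injective hε).injOn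
  refine ⟨hmaps, hinj, surjOn_of_injOn_of_card_le _ hmaps hinj ?_⟩
  calc _ ≤ #(Icc 1 (k : ℤ)) := card_image_le
    _ = #(univ : Finset (Fin k)) := by simp

/-- The combinatorial claim in the proof of Lemma 4.2: for any sign vector
`ε ∈ {+1,−1}^k`, the map `j ↦ ε_j(k−j) − ∑_{i=1}^{j−1} ε_i` (here written with the
0-based index `j : Fin k`, so `j ↦ ε_j(k−1−j) − ∑_{i<j} ε_i`) is a bijection from
`{1,…,k}` onto `{k+1−2r : 1 ≤ r ≤ k} = {k−1, k−3, …, 1−k}`. -/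
theorem sign_vector_bijection (k : ℕ) (hk : 1 ≤ k) (ε : Fin k → ℤ)
    (hε : ∀ j, ε j = 1 ∨ ε j = -1) :
    Set.BijOn (fun j : Fin k => ε j * ((k : ℤ) - 1 - (j : ℕ)) - ∑ i ∈ Finset.Iio j, ε i)
      Set.univ
      {m : ℤ | ∃ r : ℤ, 1 ≤ r ∧ r ≤ (k : ℤ) ∧ m = (k : ℤ) + 1 - 2 * r} :=
  sign_vector_bijection_general k ε hε
end

section
/- Let k ≥ 1 and let q ∈ ℂ be nonzero. Define v = ∑_{ε ∈ {+1,−1}^k} (−q)^{n(ε)} · w_ε ⊗ w_{−ε} ∈ W ⊗ W, where n(ε) = ∑_{j=1}^{k} ((1−ε_j)/2)·(k−j) ∈ ℕ. Then C v = (−1)^{k−1} · [k] · v, where [k] = q^{k−1} + q^{k−3} + ⋯ + q^{1−k} = ∑_{r=1}^{k} q^{k+1−2r}. In particular v is an eigenvector of C with eigenvalue ±[k]. (Key computation in the proof of Lemma 4.2.) -/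
noncomputable section

/-- The sign `±1` encoded by a boolean (`true ↦ +1`, `false ↦ −1`). -/
def sgn (b : Bool) : ℤ := if b then 1 else -1

/-- Negate the `j`-th entry of a sign vector. -/
def flipAt {k : ℕ} (ε : Fin k → Bool) (j : Fin k) : Fin k → Bool :=
  Function.update ε j (!(ε j))

/-- `m_j(ε,δ) = ∑_{i=1}^{j−1} (δ_i − ε_i)/2 ∈ ℤ`. -/
def mexp {k : ℕ} (ε δ : Fin k → Bool) (j : Fin k) : ℤ :=
  ∑ i ∈ Finset.Iio j, (sgn (δ i) - sgn (ε i)) / 2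

/-- The vector space `W ⊗ W`, modeled as functions on pairs of sign vectors
(the basis vector `w_ε ⊗ w_δ` corresponding to the pair `(ε, δ)`). -/
abbrev WW (k : ℕ) := ((Fin k → Bool) × (Fin k → Bool)) → ℂ

/-- The operator `C` on `W ⊗ W`, determined on basis vectors by
`C(w_ε ⊗ w_δ) = ∑_{j : ε_j = −δ_j} (−q)^{m_j(ε,δ)} w_{ε̄^j} ⊗ w_{δ̄^j}`. -/
def Cop (k : ℕ) (q : ℂ) (v : WW k) : WW k := fun p =>
  ∑ j ∈ Finset.univ.filter (fun j : Fin k => p.1 j ≠ p.2 j),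
    (-q) ^ (mexp p.1 p.2 j) * v (flipAt p.1 j, flipAt p.2 j)

/-- `n(ε) = ∑_{j=1}^k ((1−ε_j)/2)·(k−j) ∈ ℕ` (0-based: weight `k−1−j` at entry `j`). -/
def nexp {k : ℕ} (ε : Fin k → Bool) : ℕ :=
  ∑ j : Fin k, if ε j then 0 else k - 1 - (j : ℕ)

/-- The vector `v = ∑_{ε} (−q)^{n(ε)} w_ε ⊗ w_{−ε} ∈ W ⊗ W`. -/
def vvec (k : ℕ) (q : ℂ) : WW k := fun p =>
  if p.2 = fun j => !(p.1 j) then (-q) ^ nexp p.1 else 0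

/-!
At a basis vector `w_ε ⊗ w_{−ε}` every index `j` contributes to `C v`, and its term is
`(−q)^(m_j + n(ε̄^j) − n(ε))` times the coefficient `(−q)^{n(ε)}` of `v`. Counting the `+` and `−`
entries of `ε` left of `j` shows that this exponent is `k − 1 − 2 · slot ε j`, where `slot ε`
numbers the `+` entries `0, 1, …` and the `−` entries `k − 1, k − 2, …` from the left. Since
`slot ε` is a permutation, the terms sum to `∑_r (−q)^(k−1−2r) = (−1)^(k−1) [k]`. Off the pairs
`(ε, −ε)` both sides vanish, because flipping the same entry of `ε` and `δ` preserves `δ = −ε`.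
-/

open Finset

namespace SpinorCasimir

variable {k : ℕ}

lemma flipAt_flipAt (ε : Fin k → Bool) (j : Fin k) : flipAt (flipAt ε j) j = ε := by
  simp [flipAt]

lemma flipAt_not (ε : Fin k → Bool) (j : Fin k) :
    flipAt (fun i => !ε i) j = fun i => !flipAt ε j i := by
  funext i
  by_cases hij : i = j
  · subst hij; simp [flipAt]
  · simp [flipAt, Function.update_of_ne hij]

lemma eq_not_of_flipAt_eq_not {ε δ : Fin k → Bool} {j : Fin k}
    (h : flipAt δ j = fun i => !flipAt ε j i) : δ = fun i => !ε i := by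
  rw [← flipAt_flipAt δ j, h, flipAt_not, flipAt_flipAt]

def countBelow (ε : Fin k → Bool) (b : Bool) (n : ℕ) : ℕ := #{i : Fin k | (i : ℕ) < n ∧ ε i = b}

lemma countBelow_true_add_false (ε : Fin k → Bool) {n : ℕ} (hn : n ≤ k) :
    countBelow ε true n + countBelow ε false n = n := by
  simp only [countBelow, ← filter_filter, Bool.eq_false_iff]
  rw [card_filter_add_card_filter_not, Fin.card_filter_val_lt, min_eq_right hn]

lemma countBelow_lt_countBelow {ε : Fin k → Bool} {b : Bool} {j : Fin k} {n : ℕ}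
    (hjn : (j : ℕ) < n) (hj : ε j = b) : countBelow ε b j < countBelow ε b n := by
  refine card_lt_card ⟨fun i hi => ?_, fun hsub => ?_⟩
  · simp only [mem_filter, mem_univ, true_and] at hi ⊢
    exact ⟨hi.1.trans hjn, hi.2⟩
  · simpa using hsub (by simp [hjn, hj] : j ∈ _)

lemma mexp_not (ε : Fin k → Bool) (j : Fin k) :
    mexp ε (fun i => !ε i) j = (countBelow ε false j : ℤ) - countBelow ε true j := by
  have hterm : ∀ i, (sgn (!ε i) - sgn (ε i)) / 2 =
      (if ε i = false then 1 else 0) - (if ε i = true then 1 else 0) := by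
    intro i; cases ε i <;> decide
  simp only [mexp, hterm, sum_sub_distrib, sum_boole, countBelow, ← filter_filter,
    Fin.val_fin_lt, filter_gt_eq_Iio]

lemma nexp_flipAt (ε : Fin k → Bool) (j : Fin k) :
    (nexp (flipAt ε j) : ℤ) - nexp ε =
      if ε j then (k : ℤ) - 1 - j else (j : ℤ) - (k - 1) := by
  simp only [nexp]
  push_cast
  rw [← sum_sub_distrib, sum_eq_single j]
  · have := j.isLt
    cases h : ε j <;> simp [flipAt, h] <;> omega
  · intro i _ hij; simp [flipAt, Function.update_of_ne hij]
  · simp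

def slot (ε : Fin k → Bool) (j : Fin k) : Fin k :=
  ⟨if ε j then countBelow ε true j else k - 1 - countBelow ε false j, by
    have := countBelow_true_add_false ε j.isLt.le
    have := j.isLt
    split <;> omega⟩

lemma slot_ne_of_lt (ε : Fin k → Bool) {j j' : Fin k} (hjj' : j < j') :
    slot ε j ≠ slot ε j' := by
  have hj := countBelow_true_add_false ε j.isLt.le
  have hj' := countBelow_true_add_false ε j'.isLt.le
  have hall := countBelow_true_add_false ε le_rfl
  intro h
  replace h := congrArg Fin.val h
  have hlt : (j : ℕ) < j' := hjj'
  cases hb : ε j <;> cases hb' : ε j' <;>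
    simp only [slot, hb, hb', if_true, if_false, Bool.false_eq_true] at h <;>
    have := countBelow_lt_countBelow hlt hb <;>
    have := countBelow_lt_countBelow j.isLt hb <;>
    have := countBelow_lt_countBelow j'.isLt hb' <;>
    omega

lemma slot_bijective (ε : Fin k → Bool) : Function.Bijective (slot ε) :=
  Finite.injective_iff_bijective.mp (.of_lt_imp_ne fun _ _ => slot_ne_of_lt ε)

lemma mexp_not_add_nexp_flipAt (ε : Fin k → Bool) (j : Fin k) :
    mexp ε (fun i => !ε i) j + nexp (flipAt ε j) =
      (k : ℤ) - 1 - 2 * (slot ε j : ℕ) + nexp ε := by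
  have hm := mexp_not ε j
  have hn := nexp_flipAt ε j
  have hj := countBelow_true_add_false ε j.isLt.le
  have := j.isLt
  cases hb : ε j <;> simp only [slot, hb, if_true, if_false, Bool.false_eq_true] at hn ⊢ <;> omega

lemma Cop_vvec_apply_of_ne {ε δ : Fin k → Bool} (q : ℂ) (h : δ ≠ fun i => !ε i) :
    Cop k q (vvec k q) (ε, δ) = 0 :=
  sum_eq_zero fun j _ => by
    simp only [vvec, if_neg (mt eq_not_of_flipAt_eq_not h), mul_zero]

lemma Cop_vvec_apply_not {q : ℂ} (hq : q ≠ 0) (ε : Fin k → Bool) :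
    Cop k q (vvec k q) (ε, fun i => !ε i) =
      (∑ r ∈ range k, (-q) ^ ((k : ℤ) - 1 - 2 * r)) * vvec k q (ε, fun i => !ε i) := by
  have hq' : -q ≠ 0 := neg_ne_zero.mpr hq
  have hterm : ∀ j, (-q) ^ mexp ε (fun i => !ε i) j *
      vvec k q (flipAt ε j, flipAt (fun i => !ε i) j) =
        (-q) ^ ((k : ℤ) - 1 - 2 * (slot ε j : ℕ)) * (-q) ^ nexp ε := by
    intro j
    simp only [vvec, flipAt_not, if_true]
    rw [← zpow_natCast, ← zpow_natCast, ← zpow_add₀ hq', ← zpow_add₀ hq',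
      mexp_not_add_nexp_flipAt]
  simp only [Cop, ne_eq, Bool.eq_not_self, not_false_eq_true, filter_true, hterm]
  rw [← sum_mul,
    (slot_bijective ε).sum_comp (fun r : Fin k => (-q) ^ ((k : ℤ) - 1 - 2 * (r : ℕ))),
    Fin.sum_univ_eq_sum_range (fun r => (-q) ^ ((k : ℤ) - 1 - 2 * r)), vvec, if_pos rfl]

lemma sum_neg_zpow (q : ℂ) :
    ∑ r ∈ range k, (-q) ^ ((k : ℤ) - 1 - 2 * r) =
      (-1) ^ (k - 1) * ∑ r ∈ range k, q ^ ((k : ℤ) - 1 - 2 * r) := by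
  rw [mul_sum]
  refine sum_congr rfl fun r hr => ?_
  have hexp : (k : ℤ) - 1 - 2 * r = ((k - 1 : ℕ) : ℤ) + 2 * (-r : ℤ) := by
    have := mem_range.mp hr
    omega
  rw [neg_eq_neg_one_mul, mul_zpow, hexp, zpow_add₀ (by norm_num), zpow_natCast, zpow_mul]
  norm_num

end SpinorCasimir

open SpinorCasimir

theorem Cop_vvec_eigen_general (k : ℕ) (q : ℂ) (hq : q ≠ 0) :
    Cop k q (vvec k q) =
      ((-1 : ℂ) ^ (k - 1) * ∑ r ∈ Finset.range k, q ^ ((k : ℤ) - 1 - 2 * r)) •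
        vvec k q := by
  funext ⟨ε, δ⟩
  rw [Pi.smul_apply, smul_eq_mul]
  by_cases h : δ = fun i => !ε i
  · subst h
    rw [Cop_vvec_apply_not hq, sum_neg_zpow]
  · rw [Cop_vvec_apply_of_ne q h, vvec, if_neg h, mul_zero]

/-- Key computation in the proof of Lemma 4.2:
`C v = (−1)^{k−1}·[k]·v` where `[k] = ∑_{r=1}^k q^{k+1−2r}`. -/
theorem Cop_vvec_eigen (k : ℕ) (hk : 1 ≤ k) (q : ℂ) (hq : q ≠ 0) :
    Cop k q (vvec k q) =
      ((-1 : ℂ) ^ (k - 1) * ∑ r ∈ Finset.range k, q ^ ((k : ℤ) - 1 - 2 * r)) •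
        vvec k q :=
  Cop_vvec_eigen_general k q hq
end
end

section
/- Let k ≥ 1 and let q ∈ ℂ with q ≠ 0 and q ≠ ±1. For every integer j with −k ≤ j ≤ k, the number [j] = (q^j − q^{−j})/(q − q^{−1}) is an eigenvalue of the linear operator C on W ⊗ W; that is, C has at least the 2k+1 eigenvalues [−k], [−k+1], …, [k−1], [k]. (Lemma 4.2(a).) -/
noncomputable section

/-!
Put `Q = -q` and `[j]_q = (q^j - q^(-j)) / (q - q⁻¹)`. For `s ≤ k` and `η = ±1`, let `v` be
supported on the pairs `(ε, δ)` with `ε_i ≠ δ_i` for `i < s` and `ε_i = δ_i = +1` for `i ≥ s`, with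
value `∏_{i < s, ε_i = -1} η Q^(s-1-i)`. This support is stable under the simultaneous flips in `C`,
and on it `m_j = -∑_{i<j} ε_i`, so
`(C v)(ε, δ) = v(ε, δ) · ∑_{j<s} Q^(-∑_{i<j} ε_i) (η Q^(s-1-j))^(ε_j)`.
Whatever the signs `ε_i`, the `j`-th summand is `η (F j - F (j+1)) / (Q - Q⁻¹)` for
`F n = Q^(-∑_{i<n} ε_i) (Q^(s-n) - Q^(n-s))`, so the sum telescopes to
`η [s]_Q = η (-1)^(s+1) [s]_q`; choosing `η` gives `±[s]_q = [±s]_q`.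
-/

open Finset

section QuantumInteger

variable {K : Type*} [Field K]

def qInt (q : K) (j : ℤ) : K := (q ^ j - q ^ (-j)) / (q - q⁻¹)

lemma sub_inv_ne_zero {q : K} (hq0 : q ≠ 0) (hq1 : q ≠ 1) (hq1' : q ≠ -1) : q - q⁻¹ ≠ 0 := by
  intro h
  have : (q - 1) * (q + 1) = 0 := by field_simp at h; linear_combination h
  rcases mul_eq_zero.mp this with h' | h'
  · exact hq1 (sub_eq_zero.mp h')
  · exact hq1' (eq_neg_of_add_eq_zero_left h')

lemma neg_sub_inv_neg (q : K) : -q - (-q)⁻¹ = -(q - q⁻¹) := by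
  rw [inv_neg]; ring

lemma qInt_neg (q : K) (j : ℤ) : qInt q (-j) = -qInt q j := by
  simp only [qInt, neg_neg]; ring

lemma qInt_neg_left (q : K) (s : ℕ) : qInt (-q) s = (-1) ^ (s + 1) * qInt q s := by
  simp only [qInt, zpow_neg, zpow_natCast, neg_pow q, mul_inv, ← inv_pow, inv_neg_one, ← mul_sub]
  rw [neg_sub_inv_neg, div_neg, pow_succ]
  ring

lemma zpow_mul_sgn_mul_sub (Q : K) (hQ : Q ≠ 0) (T n : ℤ) (b : Bool) :
    Q ^ (-T) * Q ^ ((n - 1) * sgn b) * (Q - Q⁻¹) =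
      Q ^ (-T) * (Q ^ n - Q ^ (-n)) - Q ^ (-(T + sgn b)) * (Q ^ (n - 1) - Q ^ (-(n - 1))) := by
  cases b <;> simp only [sgn, Bool.false_eq_true, if_false, if_true, mul_neg_one, mul_one, neg_add,
    neg_neg, zpow_add₀ hQ, zpow_neg, zpow_sub₀ hQ, zpow_one] <;> field_simp <;> ring

lemma sum_zpow_sgn_mul_sub (Q : K) (hQ : Q ≠ 0) (b : ℕ → Bool) (s : ℕ) :
    (∑ j ∈ range s, Q ^ (-∑ i ∈ range j, sgn (b i)) * Q ^ (((s : ℤ) - 1 - j) * sgn (b j))) *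
      (Q - Q⁻¹) = Q ^ (s : ℤ) - Q ^ (-(s : ℤ)) := by
  let F : ℕ → K := fun n =>
    Q ^ (-∑ i ∈ range n, sgn (b i)) * (Q ^ ((s : ℤ) - n) - Q ^ (-((s : ℤ) - n)))
  have telescope : ∀ j, Q ^ (-∑ i ∈ range j, sgn (b i)) * Q ^ (((s : ℤ) - 1 - j) * sgn (b j)) *
      (Q - Q⁻¹) = F j - F (j + 1) := by
    intro j
    simp only [F, sum_range_succ, Nat.cast_succ, show (s : ℤ) - 1 - j = (s - j) - 1 by ring,
      show (s : ℤ) - (j + 1) = (s - j) - 1 by ring]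
    exact zpow_mul_sgn_mul_sub Q hQ _ _ _
  rw [sum_mul, sum_congr rfl fun j _ => telescope j, sum_range_sub']
  simp [F]

lemma zpow_sgn_of_sq_eq_one {η : K} (hη : η ^ 2 = 1) (b : Bool) : η ^ sgn b = η := by
  cases b
  · rw [sgn, if_neg Bool.false_ne_true, zpow_neg_one, inv_eq_of_mul_eq_one_right (by rwa [← sq])]
  · rw [sgn, if_pos rfl, zpow_one]

lemma sum_zpow_sgn_eq_qInt {Q η : K} (hQ : Q - Q⁻¹ ≠ 0) (hη : η ^ 2 = 1) (b : ℕ → Bool) (s : ℕ) :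
    ∑ j ∈ range s, Q ^ (-∑ i ∈ range j, sgn (b i)) * (η * Q ^ ((s : ℤ) - 1 - j)) ^ sgn (b j) =
      η * qInt Q s := by
  have hQ0 : Q ≠ 0 := by rintro rfl; simp at hQ
  simp only [mul_zpow, zpow_sgn_of_sq_eq_one hη, ← zpow_mul, mul_left_comm _ η, ← mul_sum]
  rw [qInt, ← sum_zpow_sgn_mul_sub Q hQ0 b s, mul_div_cancel_right₀ _ hQ]

end QuantumInteger

section Reindexing

variable {M : Type*} [AddCommMonoid M] {k : ℕ}

lemma Fin.sum_Iio_eq_sum_range (j : Fin k) (f : ℕ → M) :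
    ∑ i ∈ Iio j, f i = ∑ i ∈ range j, f i := by
  rw [← Nat.Iio_eq_range, ← Fin.map_valEmbedding_Iio, sum_map]
  rfl

lemma Fin.sum_filter_lt_eq_sum_range {s : ℕ} (hs : s ≤ k) (f : ℕ → M) :
    ∑ j ∈ univ.filter (fun j : Fin k => (j : ℕ) < s), f j = ∑ j ∈ range s, f j := by
  rw [sum_filter, Fin.sum_univ_eq_sum_range (fun j => if j < s then f j else 0), ← sum_filter]
  congr 1
  ext j
  simp only [mem_filter, mem_range]
  omega

end Reindexing

section Spinor

variable {k : ℕ}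

lemma flipAt_self (ε : Fin k → Bool) (j : Fin k) : flipAt ε j j = !ε j :=
  Function.update_self _ _ _

lemma flipAt_of_ne (ε : Fin k → Bool) {i j : Fin k} (h : i ≠ j) : flipAt ε j i = ε i :=
  Function.update_of_ne h _ _

lemma mexp_of_forall_lt_ne {ε δ : Fin k → Bool} {j : Fin k} (h : ∀ i < j, ε i ≠ δ i) :
    mexp ε δ j = -∑ i ∈ Iio j, sgn (ε i) := by
  rw [mexp, ← sum_neg_distrib]
  refine sum_congr rfl fun i hi => ?_
  have := h i (mem_Iio.mp hi)
  cases hε : ε i <;> cases hδ : δ i <;> simp_all [sgn]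

def pairSupp (s : ℕ) (p : (Fin k → Bool) × (Fin k → Bool)) : Prop :=
  ∀ i : Fin k, if (i : ℕ) < s then p.1 i ≠ p.2 i else p.1 i = true ∧ p.2 i = true

lemma pairSupp_flipAt_iff {s : ℕ} {p : (Fin k → Bool) × (Fin k → Bool)} {j : Fin k}
    (hj : p.1 j ≠ p.2 j) : pairSupp s (flipAt p.1 j, flipAt p.2 j) ↔ pairSupp s p := by
  refine forall_congr' fun i => ?_
  rcases eq_or_ne i j with rfl | hij
  · simp only [flipAt_self]
    cases h₁ : p.1 i <;> cases h₂ : p.2 i <;> simp_all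
  · simp only [flipAt_of_ne _ hij]

lemma filter_ne_eq_filter_lt {s : ℕ} {p : (Fin k → Bool) × (Fin k → Bool)} (hp : pairSupp s p) :
    univ.filter (fun j => p.1 j ≠ p.2 j) = univ.filter (fun j : Fin k => (j : ℕ) < s) := by
  ext j
  have := hp j
  simp only [mem_filter, mem_univ, true_and]
  split_ifs at this with hj
  · exact iff_of_true this hj
  · exact iff_of_false (by simp [this.1, this.2]) hj

def weight (a : Fin k → ℂ) (ε : Fin k → Bool) : ℂ := ∏ i, if ε i then 1 else a i

lemma weight_flipAt (a : Fin k → ℂ) (ε : Fin k → Bool) {j : Fin k} (ha : a j ≠ 0) :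
    weight a (flipAt ε j) = a j ^ sgn (ε j) * weight a ε := by
  classical
  have hrest :
      ∏ i ∈ {j}ᶜ, (if flipAt ε j i then 1 else a i) = ∏ i ∈ {j}ᶜ, (if ε i then 1 else a i) :=
    prod_congr rfl fun i hi => by rw [flipAt_of_ne _ (by simpa using hi)]
  rw [weight, weight, Fintype.prod_eq_mul_prod_compl j, Fintype.prod_eq_mul_prod_compl j, hrest,
    flipAt_self]
  cases ε j
  · simp [sgn, ha]
  · simp [sgn]

open Classical in
def eigvec (s : ℕ) (a : Fin k → ℂ) : WW k := fun p => if pairSupp s p then weight a p.1 else 0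

lemma eigvec_ne_zero (s : ℕ) (a : Fin k → ℂ) : eigvec s a ≠ 0 := by
  intro h
  have hp : pairSupp s (fun _ => true, fun i : Fin k => decide (s ≤ (i : ℕ))) := by
    intro i
    split_ifs with hi <;> simp [hi, Nat.not_le_of_lt, not_lt.mp]
  have := congrFun h (fun _ => true, fun i : Fin k => decide (s ≤ (i : ℕ)))
  simp [eigvec, hp, weight] at this

lemma Cop_eigvec_apply (q : ℂ) (s : ℕ) {a : Fin k → ℂ} (ha : ∀ j, a j ≠ 0)
    (p : (Fin k → Bool) × (Fin k → Bool)) :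
    Cop k q (eigvec s a) p =
      (∑ j ∈ univ.filter (fun j : Fin k => (j : ℕ) < s),
        (-q) ^ (-∑ i ∈ Iio j, sgn (p.1 i)) * a j ^ sgn (p.1 j)) * eigvec s a p := by
  by_cases hp : pairSupp s p
  · rw [Cop, filter_ne_eq_filter_lt hp, sum_mul]
    refine sum_congr rfl fun j hj => ?_
    have hj : (j : ℕ) < s := (mem_filter.mp hj).2
    have hne : ∀ i : Fin k, (i : ℕ) < s → p.1 i ≠ p.2 i := fun i hi => by simpa [hi] using hp i
    rw [mexp_of_forall_lt_ne fun i hi => hne i (lt_trans hi hj), eigvec,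
      if_pos ((pairSupp_flipAt_iff (hne j hj)).2 hp), weight_flipAt a _ (ha j), eigvec, if_pos hp]
    ring
  · rw [eigvec, if_neg hp, mul_zero, Cop]
    refine sum_eq_zero fun j hj => ?_
    rw [eigvec, if_neg (mt (pairSupp_flipAt_iff (mem_filter.mp hj).2).1 hp), mul_zero]

lemma Cop_eigvec {q η : ℂ} (hq : q - q⁻¹ ≠ 0) (hη : η ^ 2 = 1) {s : ℕ} (hs : s ≤ k) :
    Cop k q (eigvec s fun j => η * (-q) ^ ((s : ℤ) - 1 - j)) =
      (η * qInt (-q) s) • eigvec s fun j => η * (-q) ^ ((s : ℤ) - 1 - j) := by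
  have hq0 : -q ≠ 0 := neg_ne_zero.mpr (by rintro rfl; simp at hq)
  have hη0 : η ≠ 0 := by rintro rfl; simp at hη
  funext p
  rw [Cop_eigvec_apply q s fun j => mul_ne_zero hη0 (zpow_ne_zero _ hq0), Pi.smul_apply,
    smul_eq_mul]
  congr 1
  obtain ⟨b, hb⟩ : ∃ b : ℕ → Bool, ∀ i : Fin k, p.1 i = b i :=
    ⟨fun n => if h : n < k then p.1 ⟨n, h⟩ else true, fun i => by simp⟩
  rw [← sum_zpow_sgn_eq_qInt (by rwa [neg_sub_inv_neg, neg_ne_zero]) hη b s,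
    ← Fin.sum_filter_lt_eq_sum_range hs]
  refine sum_congr rfl fun j _ => ?_
  simp only [hb, Fin.sum_Iio_eq_sum_range j fun i => sgn (b i)]

lemma exists_Cop_eq_smul {q : ℂ} (hq : q - q⁻¹ ≠ 0) {s : ℕ} (hs : s ≤ k) {η : ℂ} (hη : η ^ 2 = 1) :
    ∃ v : WW k, v ≠ 0 ∧ Cop k q v = (η * (-1) ^ (s + 1) * qInt q s) • v :=
  ⟨_, eigvec_ne_zero _ _, by rw [Cop_eigvec hq hη hs, qInt_neg_left, mul_assoc]⟩

end Spinor

theorem Cop_has_eigenvalues_general (k : ℕ) (q : ℂ) (hq0 : q ≠ 0)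
    (hq1 : q ≠ 1) (hq1' : q ≠ -1) :
    ∀ j : ℤ, -(k : ℤ) ≤ j → j ≤ (k : ℤ) →
      ∃ v : WW k, v ≠ 0 ∧
        Cop k q v = ((q ^ j - q ^ (-j)) / (q - q⁻¹)) • v := by
  intro j hj₁ hj₂
  have hq := sub_inv_ne_zero hq0 hq1 hq1'
  obtain ⟨s, hs⟩ := Int.eq_nat_or_neg j
  have hsk : s ≤ k := by omega
  have hsign : ((-1 : ℂ) ^ (s + 1)) ^ 2 = 1 := by
    rw [← pow_mul, (even_two.mul_left _).neg_one_pow]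
  rcases hs with rfl | rfl
  · obtain ⟨v, hv, hCv⟩ := exists_Cop_eq_smul hq hsk hsign
    exact ⟨v, hv, by rw [hCv, ← sq, hsign, one_mul]; rfl⟩
  · obtain ⟨v, hv, hCv⟩ := exists_Cop_eq_smul (η := -(-1) ^ (s + 1)) hq hsk (by rw [neg_sq, hsign])
    exact ⟨v, hv, by rw [hCv, neg_mul, ← sq, hsign, neg_one_mul, ← qInt_neg]; rfl⟩

/-- Lemma 4.2(a): for every integer `−k ≤ j ≤ k`, the quantum integer
`[j] = (q^j − q^{−j})/(q − q⁻¹)` is an eigenvalue of `C`. -/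
theorem Cop_has_eigenvalues (k : ℕ) (hk : 1 ≤ k) (q : ℂ) (hq0 : q ≠ 0)
    (hq1 : q ≠ 1) (hq1' : q ≠ -1) :
    ∀ j : ℤ, -(k : ℤ) ≤ j → j ≤ (k : ℤ) →
      ∃ v : WW k, v ≠ 0 ∧
        Cop k q v = ((q ^ j - q ^ (-j)) / (q - q⁻¹)) • v :=
  Cop_has_eigenvalues_general k q hq0 hq1 hq1'
end
end

section
/- Let N ≥ 1 and let A be a real symmetric (N+1)×(N+1) matrix, indexed by 0,…,N, with A_{ij} = 0 whenever |i−j| ≠ 1. Suppose λ ∈ ℝ and β ∈ ℝ^{N+1} satisfy A·β = λ·β with β_i ≠ 0 for every i. Then for every 0 ≤ i ≤ N−1: A_{i,i+1} = (λ/(β_i · β_{i+1})) · ∑_{s=0}^{i} (−1)^{i−s} β_s². In particular, all entries of A are completely determined by the single eigenvalue λ and its eigenvector β. (First part of the Technical Lemma in Section 4.5, Equation (17).) -/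
/-! Put `c_k = A_{k,k+1} β_k β_{k+1}`. Multiplying row `k` of `Aβ = λβ` by `β_k` and using the
symmetry of `A` gives `c_{k-1} + c_k = λ β_k²` (with `c_{-1} = 0`), a first-order recurrence whose
solution is the alternating sum `c_k = λ ∑_{s ≤ k} (-1)^{k-s} β_s²`; dividing by `β_k β_{k+1}`
recovers the entries of `A`. -/

open Finset

theorem eq_alternating_sum_of_add_eq {R : Type*} [CommRing R] {c d : ℕ → R} {m : ℕ}
    (h0 : c 0 = d 0) (hsucc : ∀ k, k + 1 < m → c k + c (k + 1) = d (k + 1)) :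
    ∀ k < m, c k = ∑ s ∈ range (k + 1), (-1) ^ (k - s) * d s := by
  intro k hk
  induction k with
  | zero => simp [h0]
  | succ k ih =>
    have hflip : ∀ s ∈ range (k + 1), (-1 : R) ^ (k + 1 - s) * d s = -((-1) ^ (k - s) * d s) :=
      fun s hs => by
        rw [Nat.sub_add_comm (Nat.lt_succ_iff.mp (mem_range.mp hs)), pow_succ]
        ring
    rw [sum_range_succ, sum_congr rfl hflip, sum_neg_distrib, ← ih (by omega), Nat.sub_self,
      pow_zero, one_mul, ← hsucc k hk]
    ring

namespace Matrix

variable {R : Type*} {n : ℕ} {A : Matrix (Fin n) (Fin n) R}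

section Row

variable [NonUnitalNonAssocSemiring R]
    (htri : ∀ i j : Fin n, |(i : ℤ) - (j : ℤ)| ≠ 1 → A i j = 0) (v : Fin n → R)
include htri

theorem mulVec_apply_zero_of_tridiagonal (h : 1 < n) :
    (A *ᵥ v) ⟨0, by omega⟩ = A ⟨0, by omega⟩ ⟨1, h⟩ * v ⟨1, h⟩ := by
  simp only [mulVec, dotProduct]
  refine Fintype.sum_eq_single _ fun j hj => ?_
  have : (j : ℕ) ≠ 1 := Fin.val_ne_of_ne hj
  refine mul_eq_zero_of_left (htri _ _ ?_) _
  rw [ne_eq, abs_eq zero_le_one]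
  dsimp only
  omega

theorem mulVec_apply_succ_of_tridiagonal {k : ℕ} (h : k + 2 < n) :
    (A *ᵥ v) ⟨k + 1, by omega⟩ = A ⟨k + 1, by omega⟩ ⟨k, by omega⟩ * v ⟨k, by omega⟩ +
      A ⟨k + 1, by omega⟩ ⟨k + 2, h⟩ * v ⟨k + 2, h⟩ := by
  simp only [mulVec, dotProduct]
  refine Fintype.sum_eq_add _ _ (by simp) fun j hj => ?_
  have : (j : ℕ) ≠ k := Fin.val_ne_of_ne hj.1
  have : (j : ℕ) ≠ k + 2 := Fin.val_ne_of_ne hj.2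
  refine mul_eq_zero_of_left (htri _ _ ?_) _
  rw [ne_eq, abs_eq zero_le_one]
  dsimp only
  omega

end Row

def bondWeight [Semiring R] (A : Matrix (Fin n) (Fin n) R) (v : Fin n → R) (k : ℕ) : R :=
  if h : k + 1 < n then A ⟨k, by omega⟩ ⟨k + 1, h⟩ * (v ⟨k, by omega⟩ * v ⟨k + 1, h⟩) else 0

section Eigenvector

variable [CommSemiring R] (htri : ∀ i j : Fin n, |(i : ℤ) - (j : ℤ)| ≠ 1 → A i j = 0)
    {v : Fin n → R} {lam : R} (heig : A *ᵥ v = lam • v)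
include htri heig

theorem bondWeight_zero (h : 1 < n) : bondWeight A v 0 = lam * v ⟨0, by omega⟩ ^ 2 := by
  have hrow := congrFun heig ⟨0, by omega⟩
  rw [mulVec_apply_zero_of_tridiagonal htri v h, Pi.smul_apply, smul_eq_mul] at hrow
  calc bondWeight A v 0 = v ⟨0, by omega⟩ * (A ⟨0, by omega⟩ ⟨1, h⟩ * v ⟨1, h⟩) := by
        rw [bondWeight, dif_pos h]; ring
    _ = lam * v ⟨0, by omega⟩ ^ 2 := by rw [hrow]; ring

theorem bondWeight_add_bondWeight_succ (hsymm : A.IsSymm) {k : ℕ} (h : k + 2 < n) :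
    bondWeight A v k + bondWeight A v (k + 1) = lam * v ⟨k + 1, by omega⟩ ^ 2 := by
  have hrow := congrFun heig ⟨k + 1, by omega⟩
  rw [mulVec_apply_succ_of_tridiagonal htri v h, Pi.smul_apply, smul_eq_mul, hsymm.apply] at hrow
  calc bondWeight A v k + bondWeight A v (k + 1)
      = v ⟨k + 1, by omega⟩ * (A ⟨k, by omega⟩ ⟨k + 1, by omega⟩ * v ⟨k, by omega⟩ +
          A ⟨k + 1, by omega⟩ ⟨k + 2, h⟩ * v ⟨k + 2, h⟩) := by
        rw [bondWeight, bondWeight, dif_pos (by omega), dif_pos h]; ring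
    _ = lam * v ⟨k + 1, by omega⟩ ^ 2 := by rw [hrow]; ring

end Eigenvector

theorem bondWeight_eq_alternating_sum [CommRing R] (hsymm : A.IsSymm)
    (htri : ∀ i j : Fin n, |(i : ℤ) - (j : ℤ)| ≠ 1 → A i j = 0)
    {v : Fin n → R} {lam : R} (heig : A *ᵥ v = lam • v) {k : ℕ} (hk : k + 1 < n) :
    bondWeight A v k =
      lam * ∑ s : Fin (k + 1), (-1) ^ (k - s) * v (Fin.castLE (by omega) s) ^ 2 := by
  let w : ℕ → R := fun s => if h : s < n then v ⟨s, h⟩ else 0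
  have hw : ∀ s (h : s < n), w s = v ⟨s, h⟩ := fun s h => dif_pos h
  have key := eq_alternating_sum_of_add_eq (c := bondWeight A v) (d := fun s => lam * w s ^ 2)
    (m := n - 1) (by rw [hw]; exact bondWeight_zero htri heig (by omega))
    (fun j hj => by rw [hw]; exact bondWeight_add_bondWeight_succ htri heig hsymm (by omega))
    k (by omega)
  rw [key, mul_sum, ← Fin.sum_univ_eq_sum_range]
  refine sum_congr rfl fun s _ => ?_
  rw [hw _ (by omega)]
  exact mul_left_comm ..

end Matrix

/-- First part of the Technical Lemma in Section 4.5 (Equation (17)): a symmetric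
tridiagonal matrix with zero diagonal is completely determined by one eigenvalue `λ`
and a corresponding nowhere-vanishing eigenvector `β`, via
`A_{i,i+1} = (λ/(β_i β_{i+1}))·∑_{s=0}^{i} (−1)^{i−s} β_s²`. -/
theorem tridiagonal_entries_from_eigenvector (N : ℕ)
    (A : Matrix (Fin (N + 1)) (Fin (N + 1)) ℝ) (hsymm : A.IsSymm)
    (htri : ∀ i j : Fin (N + 1), |(i : ℤ) - (j : ℤ)| ≠ 1 → A i j = 0)
    (lam : ℝ) (β : Fin (N + 1) → ℝ) (heig : A.mulVec β = lam • β)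
    (hβ : ∀ i, β i ≠ 0) :
    ∀ i : ℕ, (hi : i < N) →
      A ⟨i, by omega⟩ ⟨i + 1, by omega⟩ =
        lam / (β ⟨i, by omega⟩ * β ⟨i + 1, by omega⟩) *
          ∑ s : Fin (i + 1), (-1 : ℝ) ^ (i - (s : ℕ)) *
            (β ⟨(s : ℕ), lt_of_lt_of_le s.isLt (by omega)⟩) ^ 2 := by
  intro i hi
  have key := A.bondWeight_eq_alternating_sum hsymm htri heig (k := i) (by omega)
  rw [Matrix.bondWeight, dif_pos (by omega)] at key
  rw [div_mul_eq_mul_div, eq_div_iff (mul_ne_zero (hβ _) (hβ _))]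
  exact key
end
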